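/- In the setting above (N ⊴ G of finite index, L irreducible with full stabilizer, 𝒜 the twisted group algebra), let E be a finite-dimensional left 𝒜-module. Then the rule ι(a)g · (u ⊗ v) = ρ_a u ⊗ θ_a⁻¹(g v), for a ∈ A and g ∈ N, defines the structure of a G-representation on E ⊗ L. -/

import Mathlib

/-!
For `x ∈ G` put `T x = θ_{π x}⁻¹ ∘ ρ (ι (π x)⁻¹ x)` on `L`. Moving `ρ` past `θ⁻¹` conjugates its
argument by `ι`, and the cocycle relation `γ(a,b) θ_b θ_a = α(a,b) θ_{ab}` then gives
`T x T y = α(π x, π y)⁻¹ T (x y)`: `T` is a projective representation with cocycle `α⁻¹`, while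
`m ∘ π` is one on `E` with cocycle `α`. On `E ⊗ L` the scalars cancel.
-/

open scoped TensorProduct

namespace Representation

variable {k G E V : Type*} [CommRing k] [Monoid G]
  [AddCommGroup E] [Module k E] [AddCommGroup V] [Module k V]

def tensorOfProjective (f : G → E →ₗ[k] E) (g : G → V →ₗ[k] V) (c : G → G → kˣ)
    (hf1 : f 1 = LinearMap.id) (hg1 : g 1 = LinearMap.id)
    (hf : ∀ x y u, f x (f y u) = (c x y : k) • f (x * y) u)
    (hg : ∀ x y v, g x (g y v) = (↑(c x y)⁻¹ : k) • g (x * y) v) :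
    Representation k G (E ⊗[k] V) where
  toFun x := TensorProduct.map (f x) (g x)
  map_one' := by rw [hf1, hg1, TensorProduct.map_id]; rfl
  map_mul' x y := TensorProduct.ext' fun u v => by
    rw [Module.End.mul_apply, TensorProduct.map_tmul, TensorProduct.map_tmul,
      TensorProduct.map_tmul, hf, hg, TensorProduct.smul_tmul, smul_smul, ← Units.val_mul,
      mul_inv_cancel, Units.val_one, one_smul]

end Representation

namespace QuotientGroup

variable {G : Type*} [Group G] {N : Subgroup G} [N.Normal] {ι : G ⧸ N → G}

theorem section_inv_mul_mem (hι : ∀ a, mk' N (ι a) = a) (x : G) :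
    (ι (mk' N x))⁻¹ * x ∈ N := by
  rw [← eq_one_iff, ← mk'_apply]
  simp only [map_mul, map_inv, hι, inv_mul_cancel]

theorem section_cocycle_mem (hι : ∀ a, mk' N (ι a) = a) (a b : G ⧸ N) :
    (ι (a * b))⁻¹ * ι a * ι b ∈ N := by
  rw [← eq_one_iff, ← mk'_apply]
  simp only [map_mul, map_inv, hι, mul_assoc, inv_mul_cancel]

end QuotientGroup

section Clifford

open QuotientGroup

variable {k G V : Type*} [CommRing k] [Group G] [AddCommGroup V] [Module k V]
  {N : Subgroup G} [hN : N.Normal] {ρ : Representation k N V} {ι : G ⧸ N → G}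
  {θ : G ⧸ N → (V ≃ₗ[k] V)}

theorem symm_intertwines_conj (b : G ⧸ N)
    (hθ : ∀ (n : N) (v : V),
      θ b (ρ n v) = ρ ⟨(ι b)⁻¹ * ↑n * ι b, by simpa using hN.conj_mem _ n.2 (ι b)⁻¹⟩ (θ b v))
    (n : N) (w : V) :
    ρ n ((θ b).symm w) =
      (θ b).symm (ρ ⟨(ι b)⁻¹ * ↑n * ι b, by simpa using hN.conj_mem _ n.2 (ι b)⁻¹⟩ w) := by
  rw [LinearEquiv.eq_symm_apply, hθ, LinearEquiv.apply_symm_apply]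

theorem symm_symm_eq_cocycle (hι : ∀ a, mk' N (ι a) = a) (α : G ⧸ N → G ⧸ N → kˣ)
    (a b : G ⧸ N)
    (hα : ∀ v, ρ ⟨(ι (a * b))⁻¹ * ι a * ι b, section_cocycle_mem hι a b⟩ (θ b (θ a v)) =
      (α a b : k) • θ (a * b) v)
    (w : V) :
    (θ a).symm ((θ b).symm w) =
      (↑(α a b)⁻¹ : k) • (θ (a * b)).symm
        (ρ ⟨(ι (a * b))⁻¹ * ι a * ι b, section_cocycle_mem hι a b⟩ w) := by
  have h := congrArg (θ (a * b)).symm (hα ((θ a).symm ((θ b).symm w)))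
  simp only [LinearEquiv.apply_symm_apply, map_smul, LinearEquiv.symm_apply_apply] at h
  rw [h, smul_smul, ← Units.val_mul, inv_mul_cancel, Units.val_one, one_smul]

variable (ρ θ) in
def twistedAction (hι : ∀ a, mk' N (ι a) = a) (x : G) : V →ₗ[k] V :=
  (θ (mk' N x)).symm.toLinearMap ∘ₗ ρ ⟨(ι (mk' N x))⁻¹ * x, section_inv_mul_mem hι x⟩

theorem twistedAction_eq (hι : ∀ a, mk' N (ι a) = a) {x : G} {a : G ⧸ N} (hx : mk' N x = a)
    (v : V) :
    twistedAction ρ θ hι x v =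
      (θ a).symm (ρ ⟨(ι a)⁻¹ * x, hx ▸ section_inv_mul_mem hι x⟩ v) := by
  subst hx
  rfl

theorem twistedAction_one (hι : ∀ a, mk' N (ι a) = a) (hι1 : ι 1 = 1)
    (hθ1 : θ 1 = LinearEquiv.refl k V) :
    twistedAction ρ θ hι 1 = LinearMap.id := by
  ext v
  rw [twistedAction_eq hι (map_one _), hθ1]
  simp only [hι1, inv_one, one_mul, LinearEquiv.refl_symm, LinearEquiv.refl_apply]
  exact LinearMap.congr_fun (map_one ρ) v

theorem twistedAction_mul (hι : ∀ a, mk' N (ι a) = a)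
    (hθ : ∀ (a : G ⧸ N) (n : N) (v : V),
      θ a (ρ n v) = ρ ⟨(ι a)⁻¹ * ↑n * ι a, by simpa using hN.conj_mem _ n.2 (ι a)⁻¹⟩ (θ a v))
    (α : G ⧸ N → G ⧸ N → kˣ)
    (hα : ∀ (a b : G ⧸ N) (v : V),
      ρ ⟨(ι (a * b))⁻¹ * ι a * ι b, section_cocycle_mem hι a b⟩ (θ b (θ a v)) =
        (α a b : k) • θ (a * b) v)
    (x y : G) (v : V) :
    twistedAction ρ θ hι x (twistedAction ρ θ hι y v) =
      (↑(α (mk' N x) (mk' N y))⁻¹ : k) • twistedAction ρ θ hι (x * y) v := by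
  set a := mk' N x
  set b := mk' N y
  calc twistedAction ρ θ hι x (twistedAction ρ θ hι y v)
      = (θ a).symm (ρ ⟨_, section_inv_mul_mem hι x⟩
          ((θ b).symm (ρ ⟨_, section_inv_mul_mem hι y⟩ v))) := rfl
    _ = (↑(α a b)⁻¹ : k) • (θ (a * b)).symm (ρ ⟨(ι (a * b))⁻¹ * (x * y),
          map_mul (mk' N) x y ▸ section_inv_mul_mem hι (x * y)⟩ v) := by
        rw [symm_intertwines_conj b (hθ b), symm_symm_eq_cocycle hι α a b (hα a b),
          ← Module.End.mul_apply, ← map_mul ρ, ← Module.End.mul_apply, ← map_mul ρ]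
        -- the three elements of `N` multiply to `ι(ab)⁻¹ x y`
        congr 4
        ext
        simp only [Subgroup.coe_mul, a, b]
        group
    _ = _ := by rw [twistedAction_eq hι (map_mul (mk' N) x y)]

end Clifford

/-- In the Clifford-theoretic setting (`N ⊴ G` of finite index, `A = G ⧸ N`, section `ι`
with `ι 1 = 1`, irreducible `N`-representation `L = (V, ρ)` with full stabilizer witnessed
by `θ_a : L ≅ {}^{ι a}L`, `θ_1 = id`, and 2-cocycle `α`), let `E` be a finite-dimensional
left module over the twisted group algebra `𝒜` (encoded by operators `m a` with
`m 1 = id` and `m a ∘ m b = α(a,b) • m (ab)`).  Then the rule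
`ι(a)g · (u ⊗ v) = ρ_a u ⊗ θ_a⁻¹(g v)` for `a ∈ A`, `g ∈ N` defines a representation of
`G` on `E ⊗ L`: in closed form, `x ∈ G` acts on `u ⊗ v` by
`m (π x) u ⊗ θ_{π x}⁻¹ (ρ(ι(π x)⁻¹ x) v)`. -/
theorem twisted_module_tensor_rep {k G V E : Type*} [Field k] [Group G]
    [AddCommGroup V] [Module k V]
    [AddCommGroup E] [Module k E]
    (N : Subgroup G) [hN : N.Normal]
    (ρ : Representation k N V)
    (ι : G ⧸ N → G) (hι : ∀ a, QuotientGroup.mk' N (ι a) = a) (hι1 : ι 1 = 1)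
    (θ : G ⧸ N → (V ≃ₗ[k] V)) (hθ1 : θ 1 = LinearEquiv.refl k V)
    (hθ : ∀ (a : G ⧸ N) (n : N) (v : V),
      θ a (ρ n v) =
        ρ ⟨(ι a)⁻¹ * ↑n * ι a, by simpa using hN.conj_mem _ n.2 (ι a)⁻¹⟩ (θ a v))
    (α : G ⧸ N → G ⧸ N → kˣ)
    (hα : ∀ (a b : G ⧸ N) (v : V),
      ρ ⟨(ι (a * b))⁻¹ * ι a * ι b, by
          rw [← QuotientGroup.eq_one_iff]
          show (QuotientGroup.mk' N) ((ι (a * b))⁻¹ * ι a * ι b) = 1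
          simp only [map_mul, map_inv, hι]
          group⟩
        (θ b (θ a v)) = (α a b : k) • θ (a * b) v)
    (m : G ⧸ N → (E →ₗ[k] E)) (hm1 : m 1 = LinearMap.id)
    (hm : ∀ (a b : G ⧸ N) (u : E), m a (m b u) = (α a b : k) • m (a * b) u) :
    ∃ σ : Representation k G (E ⊗[k] V),
      ∀ (x : G) (u : E) (v : V),
        σ x (u ⊗ₜ[k] v) =
          m (QuotientGroup.mk' N x) u ⊗ₜ[k]
            (θ (QuotientGroup.mk' N x)).symm
              (ρ ⟨(ι (QuotientGroup.mk' N x))⁻¹ * x, by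
                  rw [← QuotientGroup.eq_one_iff]
                  show (QuotientGroup.mk' N) ((ι (QuotientGroup.mk' N x))⁻¹ * x) = 1
                  simp only [map_mul, map_inv, hι]
                  group⟩ v) := by
  exact ⟨Representation.tensorOfProjective (fun x => m (QuotientGroup.mk' N x))
    (twistedAction ρ θ hι) (fun x y => α (QuotientGroup.mk' N x) (QuotientGroup.mk' N y))
    (by rw [map_one, hm1]) (twistedAction_one hι hι1 hθ1)
    (fun x y u => by rw [hm, map_mul]) (twistedAction_mul hι hθ α hα), fun _ _ _ => rfl⟩
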